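/- arXiv:0906.1055 — 5 statements merged into one kernel-verified Lean document; each statement's English description precedes it below -/
import Mathlib

section
/- Let π(·; J, δ) be the probability measure on Θ with density proportional to (U(θ)+δ)^J with respect to Lebesgue measure. Then for all α ∈ (0,1], ε ∈ [0,1], J ≥ 1 and δ > 0: π(Θ(ε,α); J, δ) ≥ 1 / ( 1 + [(1+δ)/(ε+1+δ)]^J · [ (1/α)·(1+δ)/(ε+δ) − 1 ] · (1+δ)/δ ). -/
/-!
Let `y₀` be the upper `α`-quantile of `U` on `Θ`: the set `{U > y₀}` has mass at most `α |Θ|`,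
while `{U ≥ y₀}` has mass at least `α |Θ|`. Every `θ` with `U θ ≥ y₀ - ε` is an approximate
optimizer, so the non-optimizers lie in `{U < y₀ - ε}`, where the weight `(U + δ) ^ J` is at most
`r ^ J (y₀ + δ) ^ J` with `r = (1 + δ) / (ε + 1 + δ)`; on `{U ≥ y₀}`, which consists of optimizers,
it is at least `(y₀ + δ) ^ J`. Comparing masses gives
`π(Θ(ε,α)ᶜ) ≤ r ^ J (1 / α - 1) π(Θ(ε,α))`.
-/

open MeasureTheory Real Set Filter Topology
open scoped ENNReal

section UpperQuantile

variable {X : Type*} [MeasurableSpace X] (μ : Measure X) (u : X → ℝ) (c : ℝ≥0∞)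

noncomputable def upperQuantile : ℝ := sInf {y | μ {x | y < u x} ≤ c}

variable {μ u c} {y₁ y₂ : ℝ}

lemma antitone_measure_setOf_lt : Antitone fun y => μ {x | y < u x} :=
  fun _ _ hy => measure_mono fun _ hx => hy.trans_lt hx

lemma mem_lowerBounds_setOf_measure_lt_le (hlo : c < μ {x | y₁ < u x}) :
    y₁ ∈ lowerBounds {y | μ {x | y < u x} ≤ c} := fun _ hy =>
  le_of_not_gt fun h => (hlo.trans_le (antitone_measure_setOf_lt h.le)).not_ge hy

lemma le_upperQuantile (hlo : c < μ {x | y₁ < u x}) (hhi : μ {x | y₂ < u x} ≤ c) :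
    y₁ ≤ upperQuantile μ u c :=
  le_csInf ⟨y₂, hhi⟩ (mem_lowerBounds_setOf_measure_lt_le hlo)

lemma upperQuantile_le (hlo : c < μ {x | y₁ < u x}) (hhi : μ {x | y₂ < u x} ≤ c) :
    upperQuantile μ u c ≤ y₂ :=
  csInf_le ⟨y₁, mem_lowerBounds_setOf_measure_lt_le hlo⟩ hhi

/-- Right continuity of the tail `y ↦ μ {y < u}`. -/
lemma measure_upperQuantile_lt_le (hhi : μ {x | y₂ < u x} ≤ c) :
    μ {x | upperQuantile μ u c < u x} ≤ c := by
  obtain ⟨z, hz_anti, hz_gt, hz_lim⟩ := exists_seq_strictAnti_tendsto (upperQuantile μ u c)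
  have hunion : {x | upperQuantile μ u c < u x} = ⋃ n, {x | z n < u x} := by
    ext x
    simp only [mem_ofPred_eq, mem_iUnion]
    exact ⟨fun hx => (hz_lim.eventually (gt_mem_nhds hx)).exists,
      fun ⟨n, hn⟩ => (hz_gt n).trans hn⟩
  have hmono : Monotone fun n => {x | z n < u x} :=
    fun _ _ hmn _ hx => (hz_anti.antitone hmn).trans_lt hx
  rw [hunion, hmono.measure_iUnion]
  refine iSup_le fun n => ?_
  obtain ⟨y, hy, hyz⟩ := exists_lt_of_csInf_lt ⟨y₂, hhi⟩ (hz_gt n)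
  exact (antitone_measure_setOf_lt hyz.le).trans hy

/-- Left limit of the tail `y ↦ μ {y < u}`. -/
lemma le_measure_le_upperQuantile [IsFiniteMeasure μ] (hu : Measurable u)
    (hlo : c < μ {x | y₁ < u x}) : c ≤ μ {x | upperQuantile μ u c ≤ u x} := by
  obtain ⟨z, hz_mono, hz_lt, hz_lim⟩ := exists_seq_strictMono_tendsto (upperQuantile μ u c)
  have hinter : {x | upperQuantile μ u c ≤ u x} = ⋂ n, {x | z n < u x} := by
    ext x
    simp only [mem_ofPred_eq, mem_iInter]
    refine ⟨fun hx n => (hz_lt n).trans_le hx, fun hx => le_of_tendsto hz_lim ?_⟩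
    exact Eventually.of_forall fun n => (hx n).le
  have hanti : Antitone fun n => {x | z n < u x} :=
    fun _ _ hmn _ hx => (hz_mono.monotone hmn).trans_lt hx
  rw [hinter, hanti.measure_iInter (fun n => (hu measurableSet_Ioi).nullMeasurableSet)
    ⟨0, measure_ne_top _ _⟩]
  refine le_iInf fun n => le_of_not_ge fun hn => (hz_lt n).not_ge ?_
  exact csInf_le ⟨y₁, mem_lowerBounds_setOf_measure_lt_le hlo⟩ hn

end UpperQuantile

section DomainOptimizers

variable {X : Type*} [MeasurableSpace X] {μ : Measure X} {u : X → ℝ}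

/-- The paper's `Θ(ε, α)` is `domainOptimizers (volume.restrict Θ) U ε (α * volume Θ) ∩ Θ`. -/
def domainOptimizers (μ : Measure X) (u : X → ℝ) (ε : ℝ) (c : ℝ≥0∞) : Set X :=
  {x | μ {x' | u x + ε < u x'} ≤ c}

lemma measurableSet_domainOptimizers (hu : Measurable u) (ε : ℝ) (c : ℝ≥0∞) :
    MeasurableSet (domainOptimizers μ u ε c) :=
  measurableSet_le ((antitone_measure_setOf_lt.measurable).comp (hu.add_const ε))
    measurable_const

lemma setOf_le_add_subset_domainOptimizers {ε y : ℝ} {c : ℝ≥0∞} (h : μ {x | y < u x} ≤ c) :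
    {x | y ≤ u x + ε} ⊆ domainOptimizers μ u ε c :=
  fun _ hx => (antitone_measure_setOf_lt hx).trans h

lemma domainOptimizers_eq_univ {ε : ℝ} {c : ℝ≥0∞} (h : μ univ ≤ c) :
    domainOptimizers μ u ε c = univ :=
  eq_univ_of_forall fun _ => (measure_mono (subset_univ _)).trans h

end DomainOptimizers

lemma measureReal_le_one_div_sub_one_mul {X : Type*} [MeasurableSpace X] {μ : Measure X}
    [IsFiniteMeasure μ] {s t : Set X} {α : ℝ} (hα : 0 < α) (ht : MeasurableSet t)
    (hst : s ⊆ tᶜ) (hmass : α * μ.real univ ≤ μ.real t) :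
    μ.real s ≤ (1 / α - 1) * μ.real t := by
  have hs : μ.real s ≤ μ.real univ - μ.real t :=
    (measureReal_mono hst).trans_eq (measureReal_compl ht)
  rw [sub_mul, one_div_mul_eq_div, le_sub_iff_add_le, le_div_iff₀ hα]
  nlinarith

/-- The ratio `(y - ε + δ) / (y + δ)` increases with `y` and equals `(1 + δ) / (ε + 1 + δ)` at
`y = 1 + ε`. -/
lemma sub_add_le_div_mul_add {y ε δ : ℝ} (hε : 0 ≤ ε) (hδ : 0 ≤ δ) (hy : y ≤ 1 + ε) :
    y - ε + δ ≤ (1 + δ) / (ε + 1 + δ) * (y + δ) := by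
  rw [div_mul_eq_mul_div, le_div_iff₀ (by positivity)]
  nlinarith [mul_nonneg hε (sub_nonneg.2 hy)]

lemma one_div_sub_one_le {α ε δ : ℝ} (hα : α ∈ Ioc 0 1) (hε : ε ∈ Icc 0 1) (hδ : 0 < δ) :
    1 / α - 1 ≤ (1 / α * ((1 + δ) / (ε + δ)) - 1) * ((1 + δ) / δ) := by
  have hα' : 1 ≤ 1 / α := one_le_one_div hα.1 hα.2
  have hεδ : 1 ≤ (1 + δ) / (ε + δ) := by rw [one_le_div (by linarith [hε.1])]; linarith [hε.2]
  have hQ : 1 / α ≤ 1 / α * ((1 + δ) / (ε + δ)) := le_mul_of_one_le_right (by linarith) hεδ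
  calc 1 / α - 1 ≤ 1 / α * ((1 + δ) / (ε + δ)) - 1 := by linarith
    _ ≤ (1 / α * ((1 + δ) / (ε + δ)) - 1) * ((1 + δ) / δ) :=
      le_mul_of_one_le_right (by linarith) (by rw [one_le_div hδ]; linarith)

lemma one_div_one_add_le_div_add {a b k K : ℝ} (hab : 0 < a + b) (hk : 0 ≤ k)
    (hb : b ≤ k * a) (hkK : k ≤ K) : 1 / (1 + K) ≤ a / (a + b) := by
  have ha : 0 < a := by nlinarith
  rw [div_le_div_iff₀ (by linarith) hab]
  nlinarith

section GibbsWeight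

variable {X : Type*} [MeasurableSpace X] {ν : Measure X} [IsFiniteMeasure ν] {u : X → ℝ}
  {J δ : ℝ}

lemma integrable_rpow_add (hu : Measurable u) (hu01 : ∀ᵐ x ∂ν, u x ∈ Icc 0 1) (hJ : 0 ≤ J)
    (hδ : 0 ≤ δ) : Integrable (fun x => (u x + δ) ^ J) ν := by
  refine .of_bound ((hu.add_const δ).pow_const J).aestronglyMeasurable ((1 + δ) ^ J) ?_
  filter_upwards [hu01] with x hx
  rw [Real.norm_of_nonneg (by have := hx.1; positivity)]
  exact rpow_le_rpow (by linarith [hx.1]) (by linarith [hx.2]) hJ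

lemma integral_rpow_add_pos [NeZero ν] (hu : Measurable u) (hu01 : ∀ᵐ x ∂ν, u x ∈ Icc 0 1)
    (hJ : 0 ≤ J) (hδ : 0 < δ) : 0 < ∫ x, (u x + δ) ^ J ∂ν := by
  calc 0 < ∫ _, δ ^ J ∂ν := by
        simpa using mul_pos (measureReal_univ_pos (μ := ν)) (rpow_pos_of_pos hδ J)
    _ ≤ ∫ x, (u x + δ) ^ J ∂ν := by
      refine integral_mono_ae (integrable_const _) (integrable_rpow_add hu hu01 hJ hδ.le) ?_
      filter_upwards [hu01] with x hx
      exact rpow_le_rpow hδ.le (by linarith [hx.1]) hJ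

lemma rpow_add_mul_measureReal_le_setIntegral (hu : Measurable u)
    (hu01 : ∀ᵐ x ∂ν, u x ∈ Icc 0 1) (hJ : 0 ≤ J) (hδ : 0 ≤ δ) {s : Set X} {y : ℝ}
    (hy : -δ ≤ y) (hs : {x | y ≤ u x} ⊆ s) :
    (y + δ) ^ J * ν.real {x | y ≤ u x} ≤ ∫ x in s, (u x + δ) ^ J ∂ν := by
  have hf := integrable_rpow_add hu hu01 hJ hδ
  calc (y + δ) ^ J * ν.real {x | y ≤ u x} ≤ ∫ x in {x | y ≤ u x}, (u x + δ) ^ J ∂ν :=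
        setIntegral_ge_of_const_le_real (hu measurableSet_Ici) (measure_ne_top _ _)
          (fun x hx => rpow_le_rpow (by linarith) (by linarith [show y ≤ u x from hx]) hJ)
          hf.integrableOn
    _ ≤ ∫ x in s, (u x + δ) ^ J ∂ν := by
        refine setIntegral_mono_set hf.integrableOn (ae_restrict_of_ae ?_)
          (Eventually.of_forall hs)
        filter_upwards [hu01] with x hx
        exact rpow_nonneg (by linarith [hx.1]) J

lemma setIntegral_rpow_add_le (hu : Measurable u) (hu01 : ∀ᵐ x ∂ν, u x ∈ Icc 0 1)
    (hJ : 0 ≤ J) (hδ : 0 ≤ δ) {s : Set X} {y ε : ℝ} (hs : MeasurableSet s) (hε : 0 ≤ ε)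
    (hy : y ≤ 1) (hsy : ∀ x ∈ s, u x + ε < y) :
    ∫ x in s, (u x + δ) ^ J ∂ν ≤ ((1 + δ) / (ε + 1 + δ) * (y + δ)) ^ J * ν.real s := by
  rw [mul_comm, ← smul_eq_mul, ← setIntegral_const]
  refine setIntegral_mono_on_ae (integrable_rpow_add hu hu01 hJ hδ).integrableOn
    (integrableOn_const (measure_ne_top _ _)) hs ?_
  filter_upwards [hu01] with x hx hxs
  have hxy := hsy x hxs
  exact rpow_le_rpow (by linarith [hx.1]) ((show u x + δ ≤ y - ε + δ by linarith).trans
    (sub_add_le_div_mul_add hε hδ (by linarith))) hJ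

theorem integral_compl_domainOptimizers_le_of_level (hu : Measurable u)
    (hu01 : ∀ᵐ x ∂ν, u x ∈ Icc 0 1) (hJ : 0 ≤ J) (hδ : 0 ≤ δ) {ε α y : ℝ} {c : ℝ≥0∞}
    (hε : 0 ≤ ε) (hα : α ∈ Ioc 0 1) (hy : y ∈ Icc (-δ) 1) (htail : ν {x | y < u x} ≤ c)
    (hmass : α * ν.real univ ≤ ν.real {x | y ≤ u x}) :
    ∫ x in (domainOptimizers ν u ε c)ᶜ, (u x + δ) ^ J ∂ν ≤
      ((1 + δ) / (ε + 1 + δ)) ^ J * (1 / α - 1) *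
        ∫ x in domainOptimizers ν u ε c, (u x + δ) ^ J ∂ν := by
  set D := domainOptimizers ν u ε c
  have hGD : {x | y ≤ u x} ⊆ D := fun x hx =>
    setOf_le_add_subset_domainOptimizers htail
      (show y ≤ u x + ε by linarith [show y ≤ u x from hx])
  have hDc : ∀ x ∈ Dᶜ, u x + ε < y := fun x hx =>
    not_le.1 fun h => hx (setOf_le_add_subset_domainOptimizers htail h)
  have hr : 0 ≤ ((1 + δ) / (ε + 1 + δ)) ^ J * (y + δ) ^ J :=
    mul_nonneg (rpow_nonneg (by positivity) J) (rpow_nonneg (by linarith [hy.1]) J)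
  calc ∫ x in Dᶜ, (u x + δ) ^ J ∂ν
      ≤ ((1 + δ) / (ε + 1 + δ) * (y + δ)) ^ J * ν.real Dᶜ :=
        setIntegral_rpow_add_le hu hu01 hJ hδ (measurableSet_domainOptimizers hu ε c).compl
          hε hy.2 hDc
    _ ≤ ((1 + δ) / (ε + 1 + δ)) ^ J * (y + δ) ^ J * ((1 / α - 1) * ν.real {x | y ≤ u x}) := by
        rw [mul_rpow (by positivity) (by linarith [hy.1])]
        exact mul_le_mul_of_nonneg_left (measureReal_le_one_div_sub_one_mul hα.1
          (hu measurableSet_Ici) (compl_subset_compl.2 hGD) hmass) hr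
    _ = ((1 + δ) / (ε + 1 + δ)) ^ J * (1 / α - 1) * ((y + δ) ^ J * ν.real {x | y ≤ u x}) := by
        ring
    _ ≤ ((1 + δ) / (ε + 1 + δ)) ^ J * (1 / α - 1) * ∫ x in D, (u x + δ) ^ J ∂ν := by
        have hα' : 0 ≤ 1 / α - 1 := sub_nonneg.2 (one_le_one_div hα.1 hα.2)
        gcongr
        exact rpow_add_mul_measureReal_le_setIntegral hu hu01 hJ hδ hy.1 hGD

theorem integral_compl_domainOptimizers_le [NeZero ν] (hu : Measurable u)
    (hu01 : ∀ᵐ x ∂ν, u x ∈ Icc 0 1) (hJ : 0 ≤ J) (hδ : 0 < δ) {ε α : ℝ} (hε : 0 ≤ ε)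
    (hα : α ∈ Ioc 0 1) :
    ∫ x in (domainOptimizers ν u ε (.ofReal α * ν univ))ᶜ, (u x + δ) ^ J ∂ν ≤
      ((1 + δ) / (ε + 1 + δ)) ^ J * (1 / α - 1) *
        ∫ x in domainOptimizers ν u ε (.ofReal α * ν univ), (u x + δ) ^ J ∂ν := by
  rcases hα.2.eq_or_lt with rfl | hα1
  · rw [ENNReal.ofReal_one, one_mul, domainOptimizers_eq_univ le_rfl]
    simp
  set c := ENNReal.ofReal α * ν univ
  have hlo : c < ν {x | -δ < u x} := by
    rw [(ae_iff_measure_eq (measurableSet_lt measurable_const hu).nullMeasurableSet).1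
      (hu01.mono fun x hx => show -δ < u x by linarith [hx.1])]
    simpa using ENNReal.mul_lt_mul_left (NeZero.ne _) (measure_ne_top _ _)
      (ENNReal.ofReal_lt_one.2 hα1)
  have hhi : ν {x | 1 < u x} ≤ c := by
    have hnull : ν {x | 1 < u x} = 0 :=
      measure_eq_zero_iff_ae_notMem.2 (hu01.mono fun x hx => not_lt.2 hx.2)
    simp [hnull]
  have hmass : α * ν.real univ ≤ ν.real {x | upperQuantile ν u c ≤ u x} := by
    have := ENNReal.toReal_mono (measure_ne_top _ _) (le_measure_le_upperQuantile hu hlo)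
    rwa [ENNReal.toReal_mul, ENNReal.toReal_ofReal hα.1.le] at this
  exact integral_compl_domainOptimizers_le_of_level hu hu01 hJ hδ.le hε hα
    ⟨le_upperQuantile hlo hhi, upperQuantile_le hlo hhi⟩ (measure_upperQuantile_lt_le hhi) hmass

end GibbsWeight

theorem measure_of_domain_optimizers_bound
    (n : ℕ) (Θ : Set (EuclideanSpace ℝ (Fin n)))
    (hΘpos : 0 < volume Θ) (hΘfin : volume Θ < ⊤)
    (U : EuclideanSpace ℝ (Fin n) → ℝ) (hUmeas : Measurable U)
    (hU01 : ∀ θ ∈ Θ, U θ ∈ Set.Icc (0 : ℝ) 1)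
    (J δ ε α : ℝ) (hJ : 1 ≤ J) (hδ : 0 < δ)
    (hα : α ∈ Set.Ioc (0 : ℝ) 1) (hε : ε ∈ Set.Icc (0 : ℝ) 1) :
    (∫ θ in {θ ∈ Θ | volume {θ' ∈ Θ | U θ' > U θ + ε} ≤ ENNReal.ofReal α * volume Θ},
        (U θ + δ) ^ J ∂volume) / (∫ θ in Θ, (U θ + δ) ^ J ∂volume) ≥
      1 / (1 + ((1 + δ) / (ε + 1 + δ)) ^ J *
        ((1 / α) * ((1 + δ) / (ε + δ)) - 1) * ((1 + δ) / δ)) := by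
  have hJ0 : 0 ≤ J := by linarith
  set ν := volume.restrict Θ
  have : IsFiniteMeasure ν := isFiniteMeasure_restrict.2 hΘfin.ne
  have : NeZero ν := ⟨by simpa [ν, ← Measure.measure_univ_eq_zero] using hΘpos.ne'⟩
  have hu01 : ∀ᵐ θ ∂ν, U θ ∈ Icc 0 1 :=
    (ae_restrict_iff (hUmeas measurableSet_Icc)).2 (ae_of_all _ hU01)
  set D := domainOptimizers ν U ε (.ofReal α * ν univ)
  have hDmeas : MeasurableSet D := measurableSet_domainOptimizers hUmeas ε _
  have hD : {θ ∈ Θ | volume {θ' ∈ Θ | U θ' > U θ + ε} ≤ ENNReal.ofReal α * volume Θ} = D ∩ Θ := by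
    ext θ
    simp only [D, domainOptimizers, ν, mem_inter_iff, mem_ofPred_eq]
    rw [Measure.restrict_apply (measurableSet_lt measurable_const hUmeas),
      Measure.restrict_apply_univ, inter_comm, and_comm]
    rfl
  have hsplit := integral_add_compl hDmeas (integrable_rpow_add hUmeas hu01 hJ0 hδ.le)
  have hr : 0 ≤ ((1 + δ) / (ε + 1 + δ)) ^ J := by have := hε.1; positivity
  rw [hD, ← Measure.restrict_restrict hDmeas, ← hsplit]
  refine one_div_one_add_le_div_add (hsplit ▸ integral_rpow_add_pos hUmeas hu01 hJ0 hδ) ?_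
    (integral_compl_domainOptimizers_le hUmeas hu01 hJ0 hδ hε.1 hα) ?_
  · exact mul_nonneg hr (sub_nonneg.2 (one_le_one_div hα.1 hα.2))
  · rw [mul_assoc]
    exact mul_le_mul_of_nonneg_left (one_div_sub_one_le hα hε hδ) hr
end

section
/- Under the setting of the measure bound theorem, for any α ∈ (0,1], ε ∈ (0,1], δ > 0 and σ ∈ (0,1), if J ≥ ((1+ε+δ)/ε)·[ log(σ/(1−σ)) + log(1/α) + 2 log((1+δ)/δ) ], then π(Θ(ε,α); J, δ) ≥ σ. -/
/-!
Pick `θ₀ ∈ Θ \ Θ(ε,α)` with `U θ₀` within `ε - η` of the supremum of `U` over `Θ \ Θ(ε,α)`, and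
put `t = U θ₀ + ε`. Points of `Θ` above the level `t` lie above that supremum, hence in `Θ(ε,α)`,
and as `θ₀ ∉ Θ(ε,α)` they have mass more than `α λ(Θ)`; in particular they exist, so `t ≤ 1`.
Thus the weight `(U + δ)^J` is at least `(t + δ)^J` on mass `α λ(Θ)` inside `Θ(ε,α)`, and at most
`(t + δ - η)^J` on `Θ \ Θ(ε,α)`. With `η = ε(1+δ)/(1+ε+δ)` the ratio of these two levels is
`(1 - η/(t+δ))^J ≤ exp(-Jη/(1+δ)) = exp(-Jε/(1+ε+δ))`, which the bound on `J` makes at most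
`α(1-σ)/σ`, and this is exactly what `σ ∫_Θ (U+δ)^J ≤ ∫_{Θ(ε,α)} (U+δ)^J` needs.
-/

open MeasureTheory Real

/-- The set `Θ(ε,α)` of approximate domain optimizers. -/
def approxOptimizers {X : Type*} [MeasurableSpace X] (μ : Measure X) (Θ : Set X) (U : X → ℝ)
    (ε α : ℝ) : Set X :=
  {θ ∈ Θ | μ {θ' ∈ Θ | U θ' > U θ + ε} ≤ ENNReal.ofReal α * μ Θ}

lemma sub_rpow_le_exp_mul_rpow {a η J : ℝ} (ha : 0 < a) (hη : η ≤ a) (hJ : 0 ≤ J) :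
    (a - η) ^ J ≤ exp (-(J * (η / a))) * a ^ J := by
  have hfrac : 0 ≤ 1 - η / a := sub_nonneg.2 ((div_le_one ha).2 hη)
  calc (a - η) ^ J = (1 - η / a) ^ J * a ^ J := by
        rw [← mul_rpow hfrac ha.le, sub_mul, div_mul_cancel₀ _ ha.ne', one_mul]
    _ ≤ exp (-(η / a)) ^ J * a ^ J := by
        gcongr
        exact one_sub_le_exp_neg _
    _ = exp (-(J * (η / a))) * a ^ J := by rw [← exp_mul]; ring_nf

lemma mul_le_one_sub_mul_mul_of_le_exp_neg_mul {a b c α σ : ℝ} (hσ : σ ∈ Set.Ioo 0 1)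
    (hα : 0 < α) (hb : 0 ≤ b) (hab : a ≤ exp (-c) * b)
    (hc : log (σ / (1 - σ)) + log (1 / α) ≤ c) :
    σ * a ≤ (1 - σ) * (α * b) := by
  obtain ⟨hσ0, hσ1⟩ := hσ
  have hodds : exp (-(log (σ / (1 - σ)) + log (1 / α))) = (1 - σ) * α / σ := by
    rw [exp_neg, exp_add, exp_log (div_pos hσ0 (sub_pos.2 hσ1)), exp_log (one_div_pos.2 hα)]
    field_simp
  calc σ * a ≤ σ * (exp (-(log (σ / (1 - σ)) + log (1 / α))) * b) := by
        gcongr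
        exact hab.trans (by gcongr)
    _ = (1 - σ) * (α * b) := by rw [hodds]; field_simp

lemma mul_rpow_sub_le_one_sub_mul_mul_rpow {t δ ε J α σ : ℝ} (hσ : σ ∈ Set.Ioo 0 1)
    (hα : 0 < α) (hδ : 0 < δ) (hε : 0 < ε) (hJ : 0 ≤ J)
    (ht : ε * (1 + δ) / (1 + ε + δ) ≤ t + δ) (ht1 : t ≤ 1)
    (hJε : log (σ / (1 - σ)) + log (1 / α) ≤ J * (ε / (1 + ε + δ))) :
    σ * (t + δ - ε * (1 + δ) / (1 + ε + δ)) ^ J ≤ (1 - σ) * (α * (t + δ) ^ J) := by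
  set η := ε * (1 + δ) / (1 + ε + δ) with hη
  have hη0 : 0 < η := by positivity
  have htδ : 0 < t + δ := hη0.trans_le ht
  refine mul_le_one_sub_mul_mul_of_le_exp_neg_mul hσ hα (rpow_nonneg htδ.le J)
    (sub_rpow_le_exp_mul_rpow htδ ht hJ) (hJε.trans ?_)
  calc J * (ε / (1 + ε + δ)) = J * (η / (1 + δ)) := by rw [hη]; field_simp
    _ ≤ J * (η / (t + δ)) := by gcongr

section
variable {X : Type*} [MeasurableSpace X] {μ : Measure X}

lemma exists_superlevel_subset_approxOptimizers {Θ : Set X} {U : X → ℝ} {ε α η : ℝ}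
    (hU : BddAbove (U '' Θ)) (hne : (Θ \ approxOptimizers μ Θ U ε α).Nonempty)
    (hη : 0 ≤ η) (hηε : η < ε) :
    ∃ t, (∀ θ ∈ Θ \ approxOptimizers μ Θ U ε α, U θ + η < t) ∧
      {θ ∈ Θ | t < U θ} ⊆ approxOptimizers μ Θ U ε α ∧
      ENNReal.ofReal α * μ Θ < μ {θ ∈ Θ | t < U θ} := by
  set B := Θ \ approxOptimizers μ Θ U ε α
  have hUB : BddAbove (U '' B) := hU.mono (Set.image_mono Set.sdiff_subset)
  obtain ⟨_, ⟨θ₀, hθ₀, rfl⟩, hnear⟩ :=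
    exists_lt_of_lt_csSup (hne.image U) (sub_lt_self (sSup (U '' B)) (sub_pos.2 hηε))
  have hbelow : ∀ θ ∈ B, U θ + η < U θ₀ + ε := fun θ hθ => by
    linarith [le_csSup hUB (Set.mem_image_of_mem U hθ)]
  refine ⟨U θ₀ + ε, hbelow, fun θ hθ => ?_, not_le.1 fun h => hθ₀.2 ⟨hθ₀.1, h⟩⟩
  by_contra hθA
  linarith [hbelow θ ⟨hθ.1, hθA⟩, hθ.2]

lemma ae_restrict_of_forall_mem_of_measurableSet_setOf {s : Set X} {p : X → Prop}
    (hp : MeasurableSet {x | p x}) (h : ∀ x ∈ s, p x) : ∀ᵐ x ∂μ.restrict s, p x :=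
  ae_restrict_of_ae_restrict_of_subset h (ae_restrict_of_forall_mem hp fun _ hx => hx)

-- `t` need not be measurable, hence only an inequality.
lemma setIntegral_le_setIntegral_add_setIntegral_diff {f : X → ℝ} {s t : Set X} (hts : t ⊆ s)
    (hf : IntegrableOn f s μ) (hf0 : 0 ≤ᵐ[μ.restrict s] f) :
    ∫ x in s, f x ∂μ ≤ ∫ x in t, f x ∂μ + ∫ x in s \ t, f x ∂μ := by
  have hft : IntegrableOn f t μ := hf.mono_set hts
  have hfst : IntegrableOn f (s \ t) μ := hf.mono_set Set.sdiff_subset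
  rw [← integral_add_measure hft hfst]
  refine integral_mono_measure ?_ ?_ (Integrable.add_measure hft hfst)
  · calc μ.restrict s ≤ μ.restrict (t ∪ s \ t) := Measure.restrict_mono (by simp) le_rfl
      _ ≤ μ.restrict t + μ.restrict (s \ t) := Measure.restrict_union_le t (s \ t)
  · exact ae_add_measure_iff.2 ⟨ae_restrict_of_ae_restrict_of_subset hts hf0,
      ae_restrict_of_ae_restrict_of_subset Set.sdiff_subset hf0⟩

lemma mul_setIntegral_le_setIntegral_of_two_levels {f : X → ℝ} {Θ A S : Set X} {lo hi α σ : ℝ}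
    (hΘ : μ Θ ≠ ⊤) (hf : IntegrableOn f Θ μ) (hf0 : 0 ≤ᵐ[μ.restrict Θ] f)
    (hSA : S ⊆ A) (hAΘ : A ⊆ Θ)
    (hhi : ∀ᵐ x ∂μ.restrict (Θ \ A), f x ≤ hi) (hlo : ∀ᵐ x ∂μ.restrict S, lo ≤ f x)
    (hS : α * μ.real Θ ≤ μ.real S) (hhi0 : 0 ≤ hi) (hlo0 : 0 ≤ lo) (hσ : σ ∈ Set.Icc 0 1)
    (hkey : σ * hi ≤ (1 - σ) * (α * lo)) :
    σ * ∫ x in Θ, f x ∂μ ≤ ∫ x in A, f x ∂μ := by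
  obtain ⟨hσ0, hσ1⟩ := hσ
  have hA : lo * (α * μ.real Θ) ≤ ∫ x in A, f x ∂μ :=
    calc lo * (α * μ.real Θ) ≤ lo * μ.real S := by gcongr
      _ = ∫ _ in S, lo ∂μ := by rw [setIntegral_const, smul_eq_mul, mul_comm]
      _ ≤ ∫ x in S, f x ∂μ := setIntegral_mono_ae_restrict
          (integrableOn_const ((measure_mono (hSA.trans hAΘ)).trans_lt hΘ.lt_top).ne)
          (hf.mono_set (hSA.trans hAΘ)) hlo
      _ ≤ ∫ x in A, f x ∂μ := setIntegral_mono_set (hf.mono_set hAΘ)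
          (ae_restrict_of_ae_restrict_of_subset hAΘ hf0) hSA.eventuallyLE
  have hB : ∫ x in Θ \ A, f x ∂μ ≤ hi * μ.real Θ :=
    calc ∫ x in Θ \ A, f x ∂μ ≤ ∫ _ in Θ \ A, hi ∂μ := setIntegral_mono_ae_restrict
          (hf.mono_set Set.sdiff_subset)
          (integrableOn_const ((measure_mono Set.sdiff_subset).trans_lt hΘ.lt_top).ne) hhi
      _ = hi * μ.real (Θ \ A) := by rw [setIntegral_const, smul_eq_mul, mul_comm]
      _ ≤ hi * μ.real Θ := by gcongr; exact Set.sdiff_subset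
  have hm : 0 ≤ μ.real Θ := measureReal_nonneg
  calc σ * ∫ x in Θ, f x ∂μ
      ≤ σ * (∫ x in A, f x ∂μ + hi * μ.real Θ) := by
        gcongr
        exact (setIntegral_le_setIntegral_add_setIntegral_diff hAΘ hf hf0).trans (by gcongr)
    _ ≤ σ * ∫ x in A, f x ∂μ + (1 - σ) * (lo * (α * μ.real Θ)) := by
        nlinarith [mul_le_mul_of_nonneg_right hkey hm]
    _ ≤ σ * ∫ x in A, f x ∂μ + (1 - σ) * ∫ x in A, f x ∂μ := by gcongr
    _ = ∫ x in A, f x ∂μ := by ring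

section Weights
variable {Θ : Set X} {U : X → ℝ} {δ J : ℝ}

lemma integrableOn_rpow_add (hΘ : μ Θ ≠ ⊤) (hU : Measurable U)
    (hU01 : ∀ θ ∈ Θ, U θ ∈ Set.Icc 0 1) (hδ : 0 ≤ δ) (hJ : 0 ≤ J) :
    IntegrableOn (fun θ => (U θ + δ) ^ J) Θ μ := by
  have hw : Measurable fun θ => (U θ + δ) ^ J := (hU.add_const δ).pow_const J
  refine Measure.integrableOn_of_bounded hΘ hw.aestronglyMeasurable (M := (1 + δ) ^ J)
    (ae_restrict_of_forall_mem_of_measurableSet_setOf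
      (measurableSet_le hw.norm measurable_const) fun θ hθ => ?_)
  obtain ⟨h0, h1⟩ := hU01 θ hθ
  rw [norm_of_nonneg (by positivity)]
  gcongr

lemma setIntegral_rpow_add_pos (hΘ0 : μ Θ ≠ 0) (hΘ : μ Θ ≠ ⊤) (hU : Measurable U)
    (hU01 : ∀ θ ∈ Θ, U θ ∈ Set.Icc 0 1) (hδ : 0 < δ) (hJ : 0 ≤ J) :
    0 < ∫ θ in Θ, (U θ + δ) ^ J ∂μ :=
  calc 0 < ∫ _ in Θ, δ ^ J ∂μ := by
        rw [setIntegral_const, smul_eq_mul]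
        exact mul_pos (ENNReal.toReal_pos hΘ0 hΘ) (rpow_pos_of_pos hδ J)
    _ ≤ ∫ θ in Θ, (U θ + δ) ^ J ∂μ :=
        setIntegral_mono_ae_restrict (integrableOn_const hΘ)
          (integrableOn_rpow_add hΘ hU hU01 hδ.le hJ)
          (ae_restrict_of_forall_mem_of_measurableSet_setOf
            (measurableSet_le measurable_const ((hU.add_const δ).pow_const J)) fun θ hθ =>
              rpow_le_rpow hδ.le (by linarith [(hU01 θ hθ).1]) hJ)

lemma mul_setIntegral_rpow_add_le_setIntegral_approxOptimizers {ε α σ : ℝ} (hΘ : μ Θ ≠ ⊤)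
    (hU : Measurable U) (hU01 : ∀ θ ∈ Θ, U θ ∈ Set.Icc 0 1) (hδ : 0 < δ) (hJ : 0 ≤ J)
    (hε : 0 < ε) (hα : 0 < α) (hσ : σ ∈ Set.Ioo 0 1)
    (hJε : log (σ / (1 - σ)) + log (1 / α) ≤ J * (ε / (1 + ε + δ))) :
    σ * ∫ θ in Θ, (U θ + δ) ^ J ∂μ ≤ ∫ θ in approxOptimizers μ Θ U ε α, (U θ + δ) ^ J ∂μ := by
  set A := approxOptimizers μ Θ U ε α
  have hAΘ : A ⊆ Θ := fun _ h => h.1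
  have hw : Measurable fun θ => (U θ + δ) ^ J := (hU.add_const δ).pow_const J
  have hw0 : 0 ≤ᵐ[μ.restrict Θ] fun θ => (U θ + δ) ^ J :=
    ae_restrict_of_forall_mem_of_measurableSet_setOf (measurableSet_le measurable_const hw)
      fun θ hθ => rpow_nonneg (by linarith [(hU01 θ hθ).1]) J
  rcases (Θ \ A).eq_empty_or_nonempty with hempty | hne
  · rw [← (Set.sdiff_eq_empty.1 hempty).antisymm hAΘ]
    exact mul_le_of_le_one_left (integral_nonneg_of_ae hw0) hσ.2.le
  set η := ε * (1 + δ) / (1 + ε + δ)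
  have hη0 : 0 ≤ η := by positivity
  have hηε : η < ε := (div_lt_iff₀ (by positivity)).2 (by nlinarith)
  obtain ⟨t, hbad, hgood, hmass⟩ := exists_superlevel_subset_approxOptimizers
    ⟨1, Set.forall_mem_image.2 fun θ hθ => (hU01 θ hθ).2⟩ hne hη0 hηε
  have ht1 : t ≤ 1 := by
    obtain ⟨θ, hθ, htθ⟩ := nonempty_of_measure_ne_zero (pos_of_gt hmass).ne'
    linarith [(hU01 θ hθ).2]
  have htη : η ≤ t := by
    obtain ⟨θ, hθ⟩ := hne
    linarith [hbad θ hθ, (hU01 θ hθ.1).1]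
  have htδ : 0 < t + δ := by linarith
  refine mul_setIntegral_le_setIntegral_of_two_levels (hi := (t + δ - η) ^ J)
    (lo := (t + δ) ^ J) (α := α) hΘ (integrableOn_rpow_add hΘ hU hU01 hδ.le hJ) hw0 hgood hAΘ
    ?_ ?_ ?_ (rpow_nonneg (by linarith) J) (rpow_nonneg htδ.le J) ⟨hσ.1.le, hσ.2.le⟩
    (mul_rpow_sub_le_one_sub_mul_mul_rpow hσ hα hδ hε hJ (by linarith) ht1 hJε)
  · exact ae_restrict_of_forall_mem_of_measurableSet_setOf
      (measurableSet_le hw measurable_const) fun θ hθ =>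
        rpow_le_rpow (by linarith [(hU01 θ hθ.1).1]) (by linarith [hbad θ hθ]) hJ
  · exact ae_restrict_of_forall_mem_of_measurableSet_setOf
      (measurableSet_le measurable_const hw) fun θ hθ =>
        rpow_le_rpow htδ.le (by linarith [hθ.2]) hJ
  · have := ENNReal.toReal_mono ((measure_mono fun θ hθ => hθ.1).trans_lt hΘ.lt_top).ne hmass.le
    rwa [ENNReal.toReal_mul, ENNReal.toReal_ofReal hα.le] at this

end Weights

end

theorem J_bound_gives_confidence
    (n : ℕ) (Θ : Set (EuclideanSpace ℝ (Fin n)))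
    (hΘpos : 0 < volume Θ) (hΘfin : volume Θ < ⊤)
    (U : EuclideanSpace ℝ (Fin n) → ℝ) (hUmeas : Measurable U)
    (hU01 : ∀ θ ∈ Θ, U θ ∈ Set.Icc (0 : ℝ) 1)
    (J δ ε α σ : ℝ) (hJ1 : 1 ≤ J) (hδ : 0 < δ)
    (hα : α ∈ Set.Ioc (0 : ℝ) 1) (hε : ε ∈ Set.Ioc (0 : ℝ) 1)
    (hσ : σ ∈ Set.Ioo (0 : ℝ) 1)
    (hJ : J ≥ ((1 + ε + δ) / ε) *
      (Real.log (σ / (1 - σ)) + Real.log (1 / α) + 2 * Real.log ((1 + δ) / δ))) :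
    (∫ θ in {θ ∈ Θ | volume {θ' ∈ Θ | U θ' > U θ + ε} ≤ ENNReal.ofReal α * volume Θ},
        (U θ + δ) ^ J ∂volume) / (∫ θ in Θ, (U θ + δ) ^ J ∂volume) ≥ σ := by
  have hJ0 : 0 ≤ J := zero_le_one.trans hJ1
  have hJε : log (σ / (1 - σ)) + log (1 / α) ≤ J * (ε / (1 + ε + δ)) := by
    have hδlog : 0 ≤ log ((1 + δ) / δ) := log_nonneg ((one_le_div hδ).2 (by linarith))
    have := (le_div_iff₀' (div_pos (by linarith [hε.1]) hε.1)).2 hJ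
    rw [div_div_eq_mul_div, mul_div_assoc] at this
    linarith
  rw [ge_iff_le, le_div_iff₀ (setIntegral_rpow_add_pos hΘpos.ne' hΘfin.ne hUmeas hU01 hδ hJ0)]
  exact mul_setIntegral_rpow_add_le_setIntegral_approxOptimizers hΘfin.ne hUmeas hU01 hδ hJ0
    hε.1 hα.1 hσ hJε
end

section
/- Let p(θ; J, δ) := (U(θ)+δ)^J / ∫_Θ (U(θ')+δ)^J dλ(θ'). Then for all J ≥ Ĵ ≥ 0 and δ > 0, p(θ; J, δ) ≤ ((1+δ)/δ)^{J−Ĵ} · p(θ; Ĵ, δ) for all θ ∈ Θ. -/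
open MeasureTheory Real

/-!
On `Θ` the base `U + δ` lies in `[δ, 1 + δ]`, and `(U + δ) ^ J = (U + δ) ^ (J - Ĵ) * (U + δ) ^ Ĵ`
with `J - Ĵ ≥ 0`. Bounding the factor `(U + δ) ^ (J - Ĵ)` above by `(1 + δ) ^ (J - Ĵ)` at `θ` and
below by `δ ^ (J - Ĵ)` inside the normalising integral gives the ratio `((1 + δ) / δ) ^ (J - Ĵ)`.
-/

section RealInequalities

variable {u a b s t : ℝ}

lemma Real.rpow_mem_Icc_min_max_of_mem_Icc (ha : 0 < a) (hu : u ∈ Set.Icc a b) (s : ℝ) :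
    u ^ s ∈ Set.Icc (min (a ^ s) (b ^ s)) (max (a ^ s) (b ^ s)) := by
  have hu₀ : 0 < u := ha.trans_le hu.1
  rcases le_total 0 s with hs | hs
  · exact ⟨min_le_of_left_le (rpow_le_rpow ha.le hu.1 hs),
      le_max_of_le_right (rpow_le_rpow hu₀.le hu.2 hs)⟩
  · exact ⟨min_le_of_right_le (rpow_le_rpow_of_nonpos hu₀ hu.2 hs),
      le_max_of_le_left (rpow_le_rpow_of_nonpos ha hu.1 hs)⟩

lemma Real.rpow_eq_rpow_sub_mul_rpow (hu : 0 < u) (s t : ℝ) : u ^ t = u ^ (t - s) * u ^ s := by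
  rw [← rpow_add hu, sub_add_cancel]

lemma Real.rpow_le_rpow_sub_mul_rpow (hu : 0 < u) (hub : u ≤ b) (hst : s ≤ t) :
    u ^ t ≤ b ^ (t - s) * u ^ s := by
  rw [rpow_eq_rpow_sub_mul_rpow hu s t]
  gcongr

lemma Real.rpow_sub_mul_rpow_le_rpow (ha : 0 < a) (hau : a ≤ u) (hst : s ≤ t) :
    a ^ (t - s) * u ^ s ≤ u ^ t := by
  have hu : 0 < u := ha.trans_le hau
  rw [rpow_eq_rpow_sub_mul_rpow hu s t]
  gcongr

end RealInequalities

lemma div_le_div_mul_div_of_le_mul {x X y Y A B : ℝ} (hx : 0 ≤ x) (hA : 0 < A) (hY : 0 < Y)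
    (hxy : x ≤ B * y) (hXY : A * Y ≤ X) : x / X ≤ B / A * (y / Y) := by
  calc x / X ≤ B * y / (A * Y) := div_le_div₀ (hx.trans hxy) hxy (by positivity) hXY
    _ = B / A * (y / Y) := by field_simp

section BoundedBase

variable {α : Type*} [MeasurableSpace α] {μ : Measure α} [IsFiniteMeasure μ] {f : α → ℝ}
  {a b : ℝ}

lemma integrable_rpow_of_ae_mem_Icc (hf : Measurable f) (ha : 0 < a)
    (hfab : ∀ᵐ x ∂μ, f x ∈ Set.Icc a b) (s : ℝ) : Integrable (fun x ↦ f x ^ s) μ := by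
  refine Integrable.of_bound (hf.pow_const s).aestronglyMeasurable (max (a ^ s) (b ^ s)) ?_
  filter_upwards [hfab] with x hx
  rw [norm_of_nonneg (rpow_nonneg (ha.le.trans hx.1) s)]
  exact (rpow_mem_Icc_min_max_of_mem_Icc ha hx s).2

lemma rpow_sub_mul_integral_rpow_le (hf : Measurable f) (ha : 0 < a)
    (hfab : ∀ᵐ x ∂μ, f x ∈ Set.Icc a b) {s t : ℝ} (hst : s ≤ t) :
    a ^ (t - s) * ∫ x, f x ^ s ∂μ ≤ ∫ x, f x ^ t ∂μ := by
  rw [← integral_const_mul]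
  refine integral_mono_ae ((integrable_rpow_of_ae_mem_Icc hf ha hfab s).const_mul _)
    (integrable_rpow_of_ae_mem_Icc hf ha hfab t) ?_
  filter_upwards [hfab] with x hx
  exact rpow_sub_mul_rpow_le_rpow ha hx.1 hst

lemma integral_rpow_pos_of_ae_mem_Icc [NeZero μ] (hf : Measurable f) (ha : 0 < a)
    (hfab : ∀ᵐ x ∂μ, f x ∈ Set.Icc a b) (s : ℝ) : 0 < ∫ x, f x ^ s ∂μ := by
  have hconst : ∫ _x, min (a ^ s) (b ^ s) ∂μ ≤ ∫ x, f x ^ s ∂μ := by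
    refine integral_mono_ae (integrable_const _) (integrable_rpow_of_ae_mem_Icc hf ha hfab s) ?_
    filter_upwards [hfab] with x hx
    exact (rpow_mem_Icc_min_max_of_mem_Icc ha hx s).1
  rw [integral_const, smul_eq_mul] at hconst
  obtain ⟨x, hx⟩ := hfab.exists
  have hb : 0 < b := ha.trans_le (hx.1.trans hx.2)
  exact hconst.trans_lt'
    (mul_pos measureReal_univ_pos (lt_min (rpow_pos_of_pos ha s) (rpow_pos_of_pos hb s)))

end BoundedBase

theorem density_ratio_bound_general
    (n : ℕ) (Θ : Set (EuclideanSpace ℝ (Fin n)))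
    (hΘpos : 0 < volume Θ) (hΘfin : volume Θ < ⊤)
    (U : EuclideanSpace ℝ (Fin n) → ℝ) (hUmeas : Measurable U)
    (hU01 : ∀ θ ∈ Θ, U θ ∈ Set.Icc (0 : ℝ) 1)
    (J Jhat δ : ℝ) (hJ : J ≥ Jhat) (hδ : 0 < δ) :
    ∀ θ ∈ Θ,
      (U θ + δ) ^ J / (∫ θ' in Θ, (U θ' + δ) ^ J ∂volume) ≤
        ((1 + δ) / δ) ^ (J - Jhat) *
          ((U θ + δ) ^ Jhat / (∫ θ' in Θ, (U θ' + δ) ^ Jhat ∂volume)) := by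
  intro θ hθ
  have : IsFiniteMeasure (volume.restrict Θ) := isFiniteMeasure_restrict.2 hΘfin.ne
  have : NeZero (volume.restrict Θ) := ⟨Measure.restrict_eq_zero.not.2 hΘpos.ne'⟩
  have hbase_meas : Measurable fun θ ↦ U θ + δ := hUmeas.add_const δ
  have hbase : ∀ θ ∈ Θ, U θ + δ ∈ Set.Icc δ (1 + δ) := fun θ hθ ↦
    ⟨by linarith [(hU01 θ hθ).1], by linarith [(hU01 θ hθ).2]⟩
  have hbase_ae : ∀ᵐ θ ∂volume.restrict Θ, U θ + δ ∈ Set.Icc δ (1 + δ) :=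
    (ae_restrict_iff (hbase_meas measurableSet_Icc)).2 (.of_forall hbase)
  rw [div_rpow (by linarith) hδ.le]
  exact div_le_div_mul_div_of_le_mul (rpow_nonneg (hδ.le.trans (hbase θ hθ).1) _) (by positivity)
    (integral_rpow_pos_of_ae_mem_Icc hbase_meas hδ hbase_ae Jhat)
    (rpow_le_rpow_sub_mul_rpow (hδ.trans_le (hbase θ hθ).1) (hbase θ hθ).2 hJ)
    (rpow_sub_mul_integral_rpow_le hbase_meas hδ hbase_ae hJ)

theorem density_ratio_bound
    (n : ℕ) (Θ : Set (EuclideanSpace ℝ (Fin n)))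
    (hΘpos : 0 < volume Θ) (hΘfin : volume Θ < ⊤)
    (U : EuclideanSpace ℝ (Fin n) → ℝ) (hUmeas : Measurable U)
    (hU01 : ∀ θ ∈ Θ, U θ ∈ Set.Icc (0 : ℝ) 1)
    (J Jhat δ : ℝ) (hJ : J ≥ Jhat) (hJhat : Jhat ≥ 0) (hδ : 0 < δ) :
    ∀ θ ∈ Θ,
      (U θ + δ) ^ J / (∫ θ' in Θ, (U θ' + δ) ^ J ∂volume) ≤
        ((1 + δ) / δ) ^ (J - Jhat) *
          ((U θ + δ) ^ Jhat / (∫ θ' in Θ, (U θ' + δ) ^ Jhat ∂volume)) :=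
  density_ratio_bound_general n Θ hΘpos hΘfin U hUmeas hU01 J Jhat δ hJ hδ
end

section
/- With y_ᾱ the (1−ᾱ)-quantile of U_δ under π_δ, the sets A_ᾱ := {U_δ < y_ᾱ} and Ā_ᾱ := {U_δ ≥ y_ᾱ} satisfy λ(Ā_ᾱ) > 0 and λ(A_ᾱ)/λ(Ā_ᾱ) ≤ ((1−ᾱ)/ᾱ)·((1+δ)/δ). -/
/-!
Write `μ` for Lebesgue measure on `Θ`, `f = U + δ` and `I = ∫ f dμ`. Every `y < ȳ` fails the
defining inequality of the quantile, so `∫_{f ≤ y} f < (1 - ᾱ) I`; letting `y ↑ ȳ`, the sets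
`{f ≤ y}` increase to `A = {f < ȳ}`, whence `∫_A f ≤ (1 - ᾱ) I` and `∫_Ā f ≥ ᾱ I`. Since
`δ ≤ f ≤ 1 + δ`, this gives `δ μ(A) ≤ (1 - ᾱ) I` and `ᾱ I ≤ (1 + δ) μ(Ā)`; the second forces
`μ(Ā) > 0`, and dividing the two gives the bound.
-/

open MeasureTheory Real
open Set Filter Topology

/-- The `(1 - a)`-quantile of `f` under the probability measure with density `f / ∫ f dμ`. -/
noncomputable def weightedQuantile {α : Type*} [MeasurableSpace α] (μ : Measure α) (f : α → ℝ)
    (a : ℝ) : ℝ :=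
  sInf {y | 1 - a ≤ (∫ x in {x | f x ≤ y}, f x ∂μ) / ∫ x, f x ∂μ}

section

variable {α : Type*} [MeasurableSpace α] {μ : Measure α} {f g : α → ℝ}

theorem setIntegral_lt_le_of_forall_lt {y₀ c : ℝ} (hf : Measurable f) (hg : Integrable g μ)
    (h : ∀ y < y₀, ∫ x in {x | f x ≤ y}, g x ∂μ ≤ c) :
    ∫ x in {x | f x < y₀}, g x ∂μ ≤ c := by
  set y : ℕ → ℝ := fun k => y₀ - 1 / (k + 1)
  have hy_lt : ∀ k, y k < y₀ := fun k => sub_lt_self _ Nat.one_div_pos_of_nat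
  have hy_mono : Monotone y := fun k l hkl => sub_le_sub_left (Nat.one_div_le_one_div hkl) _
  have hy_lim : Tendsto y atTop (𝓝 y₀) := by
    simpa [y] using (tendsto_const_nhds (x := y₀)).sub tendsto_one_div_add_atTop_nhds_zero_nat
  have hunion : ⋃ k, f ⁻¹' Iic (y k) = f ⁻¹' Iio y₀ := by
    rw [← preimage_iUnion, iUnion_Iic_eq_Iio_of_lt_of_tendsto hy_lt hy_lim]
  have hlim := tendsto_setIntegral_of_monotone (fun k => hf measurableSet_Iic)
    (fun k l hkl => preimage_mono (Iic_subset_Iic.2 (hy_mono hkl))) hg.integrableOn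
  rw [hunion] at hlim
  exact le_of_tendsto' hlim fun k => h _ (hy_lt k)

theorem mul_measureReal_le_setIntegral [IsFiniteMeasure μ] {m : ℝ} (hf : Integrable f μ)
    (hm : ∀ᵐ x ∂μ, m ≤ f x) (s : Set α) : m * μ.real s ≤ ∫ x in s, f x ∂μ :=
  calc m * μ.real s = ∫ _ in s, m ∂μ := by rw [setIntegral_const, smul_eq_mul, mul_comm]
    _ ≤ ∫ x in s, f x ∂μ := setIntegral_mono_ae integrableOn_const hf.integrableOn hm

theorem setIntegral_le_mul_measureReal [IsFiniteMeasure μ] {M : ℝ} (hf : Integrable f μ)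
    (hM : ∀ᵐ x ∂μ, f x ≤ M) (s : Set α) : ∫ x in s, f x ∂μ ≤ M * μ.real s :=
  calc ∫ x in s, f x ∂μ ≤ ∫ _ in s, M ∂μ :=
      setIntegral_mono_ae hf.integrableOn integrableOn_const hM
    _ = M * μ.real s := by rw [setIntegral_const, smul_eq_mul, mul_comm]

theorem setIntegral_le_of_lt_weightedQuantile {a y : ℝ} (ha : a ≤ 1)
    (hf : ∀ᵐ x ∂μ, 0 ≤ f x) (hI : 0 < ∫ x, f x ∂μ) (hy : y < weightedQuantile μ f a) :
    ∫ x in {x | f x ≤ y}, f x ∂μ ≤ (1 - a) * ∫ x, f x ∂μ := by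
  by_cases hbdd : BddBelow {y | 1 - a ≤ (∫ x in {x | f x ≤ y}, f x ∂μ) / ∫ x, f x ∂μ}
  · have hy_notMem := notMem_of_lt_csInf hy hbdd
    simp only [mem_ofPred_eq, not_le, div_lt_iff₀ hI] at hy_notMem
    exact hy_notMem.le
  · -- the junk value `sInf = 0` of an unbounded set puts `y` below the essential range of `f`
    rw [weightedQuantile, Real.sInf_of_not_bddBelow hbdd] at hy
    have hnull : μ {x | f x ≤ y} = 0 :=
      measure_mono_null (fun x hx => by simp only [mem_ofPred_eq] at hx ⊢; linarith) (ae_iff.1 hf)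
    rw [setIntegral_measure_zero _ hnull]
    exact mul_nonneg (by linarith) hI.le

theorem setIntegral_lt_weightedQuantile_le {a : ℝ} (hf : Measurable f) (hfi : Integrable f μ)
    (ha : a ≤ 1) (hf0 : ∀ᵐ x ∂μ, 0 ≤ f x) (hI : 0 < ∫ x, f x ∂μ) :
    ∫ x in {x | f x < weightedQuantile μ f a}, f x ∂μ ≤ (1 - a) * ∫ x, f x ∂μ :=
  setIntegral_lt_le_of_forall_lt hf hfi fun _ hy =>
    setIntegral_le_of_lt_weightedQuantile ha hf0 hI hy

end

section

variable {α : Type*} [MeasurableSpace α] {μ : Measure α} {s : Set α} {p : α → Prop}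

theorem measure_sep_eq_restrict_apply (hp : MeasurableSet {x | p x}) :
    μ {x ∈ s | p x} = μ.restrict s {x | p x} := by
  rw [Measure.restrict_apply hp, inter_comm]
  rfl

theorem restrict_sep_eq_restrict_restrict (hp : MeasurableSet {x | p x}) :
    μ.restrict {x ∈ s | p x} = (μ.restrict s).restrict {x | p x} := by
  rw [Measure.restrict_restrict hp, inter_comm]
  rfl

end

theorem div_le_of_mul_le_of_le_mul {A B I m M a : ℝ} (hm : 0 < m) (ha : a ∈ Ioc 0 1) (hB : 0 < B)
    (hAI : m * A ≤ (1 - a) * I) (hIB : a * I ≤ M * B) : A / B ≤ (1 - a) / a * (M / m) := by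
  obtain ⟨ha0, ha1⟩ := ha
  rw [div_le_iff₀ hB, div_mul_div_comm, div_mul_eq_mul_div, le_div_iff₀ (by positivity)]
  nlinarith [mul_le_mul_of_nonneg_left hAI ha0.le, mul_le_mul_of_nonneg_left hIB (sub_nonneg.2 ha1)]

theorem weightedQuantile_measure_ratio_le {α : Type*} [MeasurableSpace α] {μ : Measure α}
    [IsFiniteMeasure μ] [NeZero μ] {f : α → ℝ} {m M a : ℝ} (hf : Measurable f) (hm : 0 < m)
    (hbounds : ∀ᵐ x ∂μ, f x ∈ Icc m M) (ha : a ∈ Ioc 0 1) :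
    0 < μ {x | weightedQuantile μ f a ≤ f x} ∧
      μ.real {x | f x < weightedQuantile μ f a} / μ.real {x | weightedQuantile μ f a ≤ f x} ≤
        (1 - a) / a * (M / m) := by
  set q := weightedQuantile μ f a
  have hfi : Integrable f μ := Integrable.of_bound hf.aestronglyMeasurable (max |m| |M|)
    (hbounds.mono fun x hx => abs_le_max_abs_abs hx.1 hx.2)
  have hI : 0 < ∫ x, f x ∂μ := by
    have := mul_measureReal_le_setIntegral hfi (hbounds.mono fun x hx => hx.1) univ
    rw [setIntegral_univ] at this
    exact (mul_pos hm measureReal_univ_pos).trans_le this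
  have hlow := setIntegral_lt_weightedQuantile_le hf hfi ha.2
    (hbounds.mono fun x hx => hm.le.trans hx.1) hI
  have hhigh : a * ∫ x, f x ∂μ ≤ ∫ x in {x | q ≤ f x}, f x ∂μ := by
    have hsplit := integral_add_compl (measurableSet_lt hf (measurable_const (a := q))) hfi
    simp only [compl_ofPred, not_lt] at hsplit
    linarith
  have hupper := setIntegral_le_mul_measureReal hfi (hbounds.mono fun x hx => hx.2) {x | q ≤ f x}
  have hpos : 0 < μ.real {x | q ≤ f x} := by
    refine measureReal_nonneg.lt_of_ne fun h0 => ?_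
    rw [← h0, mul_zero] at hupper
    linarith [mul_pos ha.1 hI]
  have hlower := (mul_measureReal_le_setIntegral hfi (hbounds.mono fun x hx => hx.1) _).trans hlow
  exact ⟨(ENNReal.toReal_pos_iff.1 hpos).1,
    div_le_of_mul_le_of_le_mul hm ha hpos hlower (hhigh.trans hupper)⟩

theorem quantile_measure_ratio_bound
    (n : ℕ) (Θ : Set (EuclideanSpace ℝ (Fin n)))
    (hΘpos : 0 < volume Θ) (hΘfin : volume Θ < ⊤)
    (U : EuclideanSpace ℝ (Fin n) → ℝ) (hUmeas : Measurable U)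
    (hU01 : ∀ θ ∈ Θ, U θ ∈ Set.Icc (0 : ℝ) 1)
    (δ abar : ℝ) (hδ : 0 < δ) (habar : abar ∈ Set.Ioc (0 : ℝ) 1) :
    let piδ : Set (EuclideanSpace ℝ (Fin n)) → ℝ := fun A =>
      (∫ θ in A, (U θ + δ) ∂volume) / (∫ θ in Θ, (U θ + δ) ∂volume)
    let ybar : ℝ := sInf {y : ℝ | piδ {θ ∈ Θ | U θ + δ ≤ y} ≥ 1 - abar}
    0 < volume {θ ∈ Θ | U θ + δ ≥ ybar} ∧
      (volume {θ ∈ Θ | U θ + δ < ybar}).toReal /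
          (volume {θ ∈ Θ | U θ + δ ≥ ybar}).toReal ≤
        ((1 - abar) / abar) * ((1 + δ) / δ) := by
  intro piδ ybar
  set μ := volume.restrict Θ
  have : IsFiniteMeasure μ := isFiniteMeasure_restrict.2 hΘfin.ne
  have : NeZero μ := ⟨by rw [Ne, Measure.restrict_eq_zero]; exact hΘpos.ne'⟩
  have hf : Measurable fun θ => U θ + δ := hUmeas.add_const δ
  have hbounds : ∀ᵐ θ ∂μ, U θ + δ ∈ Icc δ (1 + δ) :=
    (ae_restrict_iff (hf measurableSet_Icc)).2 <| ae_of_all _ fun θ hθ =>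
      ⟨by linarith [(hU01 θ hθ).1], by linarith [(hU01 θ hθ).2]⟩
  have hybar : ybar = weightedQuantile μ (fun θ => U θ + δ) abar := by
    refine congrArg sInf (Set.ext fun y => ?_)
    change 1 - abar ≤ (∫ θ in {θ ∈ Θ | U θ + δ ≤ y}, U θ + δ) / ∫ θ, U θ + δ ∂μ ↔ _
    rw [restrict_sep_eq_restrict_restrict (measurableSet_le hf measurable_const)]
    rfl
  rw [hybar, measure_sep_eq_restrict_apply (measurableSet_le measurable_const hf),
    measure_sep_eq_restrict_apply (measurableSet_lt hf measurable_const)]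
  exact weightedQuantile_measure_ratio_le hf hδ hbounds habar
end

section
/- Let ρ ∈ (0,1], δ > 0, ε̃ := (ρ⁻¹ − 1)(1+δ), and α̃ := ((1+δ)/(ε̃+δ))·ᾱ. If θ ∈ Θ satisfies π_δ({θ' : ρ(U(θ')+δ) > U(θ)+δ}) ≤ ᾱ, then λ({θ' ∈ Θ : U(θ') > U(θ)+ε̃}) ≤ α̃·λ(Θ); i.e., θ is an approximate domain optimizer with value imprecision ε̃ and residual domain α̃. -/
open MeasureTheory Real

/-!
Let `S = {U > U θ + ε̃}`. On `S` the weight `U + δ` is at least `ε̃ + δ`, and since `U θ ≤ 1` and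
`ρ ≤ 1`, `S` lies inside the set `{ρ (U + δ) > U θ + δ}` of the hypothesis. Hence
`(ε̃ + δ) λ(S) ≤ ∫_S (U + δ) ≤ ᾱ ∫_Θ (U + δ) ≤ ᾱ (1 + δ) λ(Θ)`.
-/

lemma le_mul_of_div_le_of_nonneg_of_le {J I a : ℝ} (hJ : 0 ≤ J) (hJI : J ≤ I) (h : J / I ≤ a) :
    J ≤ a * I := by
  rcases (hJ.trans hJI).eq_or_lt with hI | hI
  · rw [← hI] at hJI ⊢
    simpa using hJI
  · exact (div_le_iff₀ hI).1 h

lemma add_lt_mul_add_of_add_inv_sub_one_mul_lt {u v ρ δ : ℝ} (hρ0 : 0 < ρ) (hρ1 : ρ ≤ 1)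
    (hu : u ≤ 1) (h : u + (ρ⁻¹ - 1) * (1 + δ) < v) : u + δ < ρ * (v + δ) := by
  have hρv : ρ * u + (1 - ρ) * (1 + δ) < ρ * v := by
    have := mul_lt_mul_of_pos_left h hρ0
    rwa [mul_add, ← mul_assoc, mul_sub, mul_inv_cancel₀ hρ0.ne', mul_one] at this
  nlinarith [mul_nonneg (sub_nonneg.2 hρ1) (sub_nonneg.2 hu)]

section

variable {α : Type*} [MeasurableSpace α] {μ : Measure α}

lemma measure_le_ofReal_mul_of_measureReal_le {s t : Set α} {k : ℝ} (hs : μ s ≠ ⊤)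
    (h : μ.real s ≤ k * μ.real t) : μ s ≤ ENNReal.ofReal k * μ t :=
  calc μ s = ENNReal.ofReal (μ.real s) := (ENNReal.ofReal_toReal hs).symm
    _ ≤ ENNReal.ofReal (k * μ.real t) := ENNReal.ofReal_le_ofReal h
    _ = ENNReal.ofReal k * ENNReal.ofReal (μ.real t) := ENNReal.ofReal_mul' measureReal_nonneg
    _ ≤ ENNReal.ofReal k * μ t := by gcongr; exact ENNReal.ofReal_toReal_le

theorem measure_le_ofReal_mul_of_setIntegral_div_integral_le [IsFiniteMeasure μ] {f : α → ℝ}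
    {S T : Set α} {a c M : ℝ} (hf : Integrable f μ) (hf0 : 0 ≤ᵐ[μ] f)
    (hfM : ∀ᵐ x ∂μ, f x ≤ M) (hS : MeasurableSet S) (hST : S ⊆ T) (hc : 0 < c)
    (hcS : ∀ x ∈ S, c ≤ f x) (h : (∫ x in T, f x ∂μ) / ∫ x, f x ∂μ ≤ a) :
    μ S ≤ ENNReal.ofReal (M / c * a) * μ Set.univ := by
  have hJ0 : 0 ≤ ∫ x in T, f x ∂μ := setIntegral_nonneg_of_ae hf0
  have hJI : ∫ x in T, f x ∂μ ≤ ∫ x, f x ∂μ := setIntegral_le_integral hf hf0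
  have ha : 0 ≤ a := (div_nonneg hJ0 (hJ0.trans hJI)).trans h
  have hIM : ∫ x, f x ∂μ ≤ M * μ.real Set.univ := by
    refine (Real.le_norm_self _).trans (norm_integral_le_of_norm_le_const ?_)
    filter_upwards [hf0, hfM] with x hx0 hxM
    rwa [Real.norm_of_nonneg hx0]
  have hmass : c * μ.real S ≤ a * (M * μ.real Set.univ) :=
    calc c * μ.real S ≤ ∫ x in S, f x ∂μ :=
          setIntegral_ge_of_const_le_real hS (measure_ne_top μ S) hcS hf.integrableOn
      _ ≤ ∫ x in T, f x ∂μ := setIntegral_mono_set hf.integrableOn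
          (ae_restrict_of_ae hf0) (Filter.Eventually.of_forall hST)
      _ ≤ a * ∫ x, f x ∂μ := le_mul_of_div_le_of_nonneg_of_le hJ0 hJI h
      _ ≤ a * (M * μ.real Set.univ) := mul_le_mul_of_nonneg_left hIM ha
  refine measure_le_ofReal_mul_of_measureReal_le (measure_ne_top μ S) ?_
  rw [div_mul_eq_mul_div, div_mul_eq_mul_div, le_div_iff₀ hc]
  linarith

end

theorem quantile_condition_implies_domain_opt_general
    (n : ℕ) (Θ : Set (EuclideanSpace ℝ (Fin n)))
    (hΘfin : volume Θ < ⊤)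
    (U : EuclideanSpace ℝ (Fin n) → ℝ) (hUmeas : Measurable U)
    (hU01 : ∀ θ ∈ Θ, U θ ∈ Set.Icc (0 : ℝ) 1)
    (δ abar ρ : ℝ) (hδ : 0 < δ)
    (hρ : ρ ∈ Set.Ioc (0 : ℝ) 1)
    (θ : EuclideanSpace ℝ (Fin n)) (hθ : θ ∈ Θ)
    (hcond : (∫ θ' in {θ' ∈ Θ | ρ * (U θ' + δ) > U θ + δ}, (U θ' + δ) ∂volume) /
        (∫ θ' in Θ, (U θ' + δ) ∂volume) ≤ abar) :
    volume {θ' ∈ Θ | U θ' > U θ + (ρ⁻¹ - 1) * (1 + δ)} ≤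
      ENNReal.ofReal (((1 + δ) / ((ρ⁻¹ - 1) * (1 + δ) + δ)) * abar) * volume Θ := by
  obtain ⟨hρ0, hρ1⟩ := hρ
  obtain ⟨hUθ0, hUθ1⟩ := hU01 θ hθ
  set ε := (ρ⁻¹ - 1) * (1 + δ)
  have hε0 : 0 ≤ ε := mul_nonneg (sub_nonneg.2 (one_le_inv₀ hρ0 |>.2 hρ1)) (by linarith)
  have : IsFiniteMeasure (volume.restrict Θ) := isFiniteMeasure_restrict.2 hΘfin.ne
  have hU : ∀ᵐ x ∂volume.restrict Θ, U x ∈ Set.Icc (0 : ℝ) 1 :=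
    (ae_restrict_iff (hUmeas measurableSet_Icc)).2 (ae_of_all _ hU01)
  have hf0 : 0 ≤ᵐ[volume.restrict Θ] fun x => U x + δ :=
    hU.mono fun x hx => by dsimp; linarith [hx.1]
  have hfM : ∀ᵐ x ∂volume.restrict Θ, U x + δ ≤ 1 + δ := hU.mono fun x hx => by linarith [hx.2]
  have hf : Integrable (fun x => U x + δ) (volume.restrict Θ) :=
    .of_bound (hUmeas.add_const δ).aestronglyMeasurable (1 + δ) <| by
      filter_upwards [hf0, hfM] with x hx0 hxM
      rwa [Real.norm_of_nonneg hx0]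
  have hS : MeasurableSet {x | U θ + ε < U x} := measurableSet_lt measurable_const hUmeas
  have hT : MeasurableSet {x | U θ + δ < ρ * (U x + δ)} :=
    measurableSet_lt measurable_const ((hUmeas.add_const δ).const_mul ρ)
  have hcondT : (∫ x in {x | U θ + δ < ρ * (U x + δ)}, U x + δ ∂volume.restrict Θ) /
      ∫ x in Θ, U x + δ ≤ abar := by
    rwa [Measure.restrict_restrict hT, Set.ofPred_inter_eq_sep]
  have key := measure_le_ofReal_mul_of_setIntegral_div_integral_le hf hf0 hfM hS
    (fun x hx => add_lt_mul_add_of_add_inv_sub_one_mul_lt hρ0 hρ1 hUθ1 hx)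
    (by linarith : 0 < ε + δ) (fun x (hx : U θ + ε < U x) => by linarith) hcondT
  rwa [Measure.restrict_apply hS, Set.ofPred_inter_eq_sep, Measure.restrict_apply_univ] at key

theorem quantile_condition_implies_domain_opt
    (n : ℕ) (Θ : Set (EuclideanSpace ℝ (Fin n)))
    (hΘpos : 0 < volume Θ) (hΘfin : volume Θ < ⊤)
    (U : EuclideanSpace ℝ (Fin n) → ℝ) (hUmeas : Measurable U)
    (hU01 : ∀ θ ∈ Θ, U θ ∈ Set.Icc (0 : ℝ) 1)
    (δ abar ρ : ℝ) (hδ : 0 < δ) (habar : abar ∈ Set.Ioc (0 : ℝ) 1)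
    (hρ : ρ ∈ Set.Ioc (0 : ℝ) 1)
    (θ : EuclideanSpace ℝ (Fin n)) (hθ : θ ∈ Θ)
    (hcond : (∫ θ' in {θ' ∈ Θ | ρ * (U θ' + δ) > U θ + δ}, (U θ' + δ) ∂volume) /
        (∫ θ' in Θ, (U θ' + δ) ∂volume) ≤ abar) :
    volume {θ' ∈ Θ | U θ' > U θ + (ρ⁻¹ - 1) * (1 + δ)} ≤
      ENNReal.ofReal (((1 + δ) / ((ρ⁻¹ - 1) * (1 + δ) + δ)) * abar) * volume Θ :=
  quantile_condition_implies_domain_opt_general n Θ hΘfin U hUmeas hU01 δ abar ρ hδ hρ θ hθ hcond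
end
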